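/- Asymptotic angle bound for shortest paths to a compact set, upper curvature bound (Lemma 4.3, curvature ≤ 0 case). Let X be a proper metric space in which every pair of points is joined by a unit-speed shortest path and in which every point has a neighborhood that is a region of curvature ≤ 0. Let K ⊆ X be compact and nonempty, let γ : [0,T] → X be a unit-speed geodesic with γ(0) ∉ K, and write ℓ(t) := Metric.infDist (γ(t)) K. Let tₙ ∈ (0,T] with tₙ → 0, and for each n let σₙ : [0,1] → X be a constant-speed shortest path from γ(tₙ) to K, meaning dist(σₙ(u), σₙ(v)) = ℓ(tₙ)·|u − v| for all u, v ∈ [0,1], σₙ(0) = γ(tₙ), and σₙ(1) ∈ K; similarly let σ₀ : [0,1] → X be a constant-speed shortest path from γ(0) to K with speed ℓ(0). Suppose σₙ → σ₀ uniformly on [0,1]. Let σ̂₀ : [0, ℓ(0)] → X, σ̂₀(r) = σ₀(r/ℓ(0)), be the unit-speed reparameterization of σ₀. Then there exists s' > 0 such that for every s ∈ (0, s'], limsup_{n→∞} ∠⁰_{γ(tₙ)}(γ(0), σₙ(s/ℓ(tₙ))) ≤ π − ∠⁺(γ, σ̂₀) (the comparison angles being defined for all sufficiently large n, since ℓ(tₙ)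 → ℓ(0) > 0). -/

import Mathlib

open Filter Topology Metric Set

noncomputable section

/-- `γ` is a unit-speed geodesic (shortest path) on the interval `[0, T]`:
the distance between any two of its points equals the parameter difference. -/
def IsUnitSpeedGeodesicOn {X : Type*} [MetricSpace X] (γ : ℝ → X) (T : ℝ) : Prop :=
  ∀ t ∈ Set.Icc (0:ℝ) T, ∀ t' ∈ Set.Icc (0:ℝ) T, dist (γ t) (γ t') = |t - t'|

/-- The Euclidean comparison angle `∠⁰_p(x, y)` at the vertex `p`. -/
def compAngle {X : Type*} [MetricSpace X] (p x y : X) : ℝ :=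
  Real.arccos ((dist p x ^ 2 + dist p y ^ 2 - dist x y ^ 2) /
    (2 * dist p x * dist p y))

/-- The upper angle `∠⁺(γ, η)` between two geodesics with `γ 0 = η 0`:
the limsup of comparison angles `∠⁰_{γ 0}(γ t, η s)` as `(t, s) → (0⁺, 0⁺)`. -/
def upperAngle {X : Type*} [MetricSpace X] (γ η : ℝ → X) : ℝ :=
  Filter.limsup (fun ts : ℝ × ℝ => compAngle (γ 0) (γ ts.1) (η ts.2))
    ((𝓝[>] (0:ℝ)) ×ˢ (𝓝[>] (0:ℝ)))

/-- The lower angle `∠⁻(γ, η)`: liminf of comparison angles. -/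
def lowerAngle {X : Type*} [MetricSpace X] (γ η : ℝ → X) : ℝ :=
  Filter.liminf (fun ts : ℝ × ℝ => compAngle (γ 0) (γ ts.1) (η ts.2))
    ((𝓝[>] (0:ℝ)) ×ˢ (𝓝[>] (0:ℝ)))

/-- `U` is a region of curvature bounded by `0` in the comparison sense, where
`rel` is `≤` (curvature `≤ 0`) or `≥` (curvature `≥ 0`): any two points of `U`
are joined by a unit-speed shortest path with image in `U`, and for every
geodesic triangle contained in `U` and every Euclidean comparison triangle,
distances between pairs of points on the sides are related by `rel` to the
distances between the corresponding comparison points. -/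
def IsCurvRegion {X : Type*} [MetricSpace X] (rel : ℝ → ℝ → Prop) (U : Set X) : Prop :=
  (∀ x ∈ U, ∀ y ∈ U, ∃ γ : ℝ → X, IsUnitSpeedGeodesicOn γ (dist x y) ∧
    γ 0 = x ∧ γ (dist x y) = y ∧ ∀ t ∈ Set.Icc (0:ℝ) (dist x y), γ t ∈ U) ∧
  (∀ x ∈ U, ∀ y ∈ U, ∀ z ∈ U, ∀ p : Fin 3 → ℝ → X,
    (∀ i, IsUnitSpeedGeodesicOn (p i) (![dist x y, dist x z, dist y z] i) ∧
      p i 0 = (![(x, y), (x, z), (y, z)] i).1 ∧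
      p i (![dist x y, dist x z, dist y z] i) = (![(x, y), (x, z), (y, z)] i).2 ∧
      ∀ t ∈ Set.Icc (0:ℝ) (![dist x y, dist x z, dist y z] i), p i t ∈ U) →
    ∀ xb yb zb : EuclideanSpace ℝ (Fin 2),
      dist xb yb = dist x y → dist xb zb = dist x z → dist yb zb = dist y z →
      ∀ i j : Fin 3, ∀ a b : ℝ,
        a ∈ Set.Icc (0:ℝ) (![dist x y, dist x z, dist y z] i) →
        b ∈ Set.Icc (0:ℝ) (![dist x y, dist x z, dist y z] j) →
        rel (dist (p i a) (p j b))
          (dist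
            (![fun c : ℝ => AffineMap.lineMap xb yb (c / dist x y),
               fun c : ℝ => AffineMap.lineMap xb zb (c / dist x z),
               fun c : ℝ => AffineMap.lineMap yb zb (c / dist y z)] i a)
            (![fun c : ℝ => AffineMap.lineMap xb yb (c / dist x y),
               fun c : ℝ => AffineMap.lineMap xb zb (c / dist x z),
               fun c : ℝ => AffineMap.lineMap yb zb (c / dist y z)] j b)))

/-- A region of curvature `≤ 0`. -/
def IsCurvLeRegion {X : Type*} [MetricSpace X] (U : Set X) : Prop :=
  IsCurvRegion (· ≤ ·) U

/-- A region of curvature `≥ 0`. -/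
def IsCurvGeRegion {X : Type*} [MetricSpace X] (U : Set X) : Prop :=
  IsCurvRegion (· ≥ ·) U

end

open Real

/-! In a region of curvature `≤ 0` around `q = γ 0`, comparison angles at `q` only grow along
shortest paths out of `q`, so `∠⁺(γ, σ̂₀)` is at most `∠⁰_q(γ t, σ̂₀ r)` for all small `t, r`.
Let `p = γ tₙ` and `w = σₙ(s / ℓ(tₙ))`, so that `dist p w = s` and `w → σ̂₀ s`. Gluing the
comparison triangles of `q p w` and `q w σ̂₀(s/2)` along a shortest path from `q` to `w` gives
`∠⁺ ≤ ∠⁰_q(p, σ̂₀(s/2)) ≤ ∠⁰_q(p, w) + ∠⁰_q(w, σ̂₀(s/2))`, and the last angle tends to `0` since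
`σ̂₀ s` and `σ̂₀(s/2)` lie on one geodesic from `q`. The comparison angles at `p` and `q` of the
Euclidean triangle of `q p w` add up to at most `π`, hence `∠⁰_p(q, w) ≤ π - ∠⁺ + o(1)`. -/

section

variable {X : Type*} [MetricSpace X]

/-- The cosine, by the law of cosines, of the angle opposite to the side `c` in a Euclidean
triangle with sides `a, b, c`. -/
noncomputable def comparisonCos (a b c : ℝ) : ℝ :=
  (a ^ 2 + b ^ 2 - c ^ 2) / (2 * a * b)

theorem compAngle_eq_arccos_comparisonCos (p x y : X) :
    compAngle p x y = arccos (comparisonCos (dist p x) (dist p y) (dist x y)) :=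
  rfl

theorem comparisonCos_mem_Icc {a b c : ℝ} (ha : 0 < a) (hb : 0 < b) (hc₁ : |a - b| ≤ c)
    (hc₂ : c ≤ a + b) : comparisonCos a b c ∈ Icc (-1) 1 := by
  have hc₀ : 0 ≤ c := (abs_nonneg _).trans hc₁
  obtain ⟨h₁, h₂⟩ := abs_le.1 hc₁
  unfold comparisonCos
  constructor
  · rw [le_div_iff₀ (by positivity)]
    nlinarith
  · rw [div_le_one (by positivity)]
    nlinarith

theorem comparisonCos_dist_mem_Icc {p x y : X} (hx : p ≠ x) (hy : p ≠ y) :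
    comparisonCos (dist p x) (dist p y) (dist x y) ∈ Icc (-1) 1 := by
  refine comparisonCos_mem_Icc (dist_pos.2 hx) (dist_pos.2 hy) ?_ ?_
  · simpa only [dist_comm p] using abs_dist_sub_le x y p
  · simpa only [dist_comm p] using dist_triangle x p y

theorem cos_compAngle {p x y : X} (hx : p ≠ x) (hy : p ≠ y) :
    cos (compAngle p x y) = comparisonCos (dist p x) (dist p y) (dist x y) :=
  cos_arccos (comparisonCos_dist_mem_Icc hx hy).1 (comparisonCos_dist_mem_Icc hx hy).2

theorem compAngle_add_compAngle_le_pi {p q w : X} (hpq : p ≠ q) (hpw : p ≠ w) (hqw : q ≠ w) :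
    compAngle p q w + compAngle q p w ≤ π := by
  have ht := dist_pos.2 hpq
  have hs := dist_pos.2 hpw
  have hc := dist_pos.2 hqw
  have hsum : comparisonCos (dist p q) (dist p w) (dist q w)
      + comparisonCos (dist q p) (dist q w) (dist p w)
      = (dist q w + dist p w) * (dist p q + dist p w - dist q w)
          * (dist p q + dist q w - dist p w) / (2 * dist p q * dist p w * dist q w) := by
    unfold comparisonCos
    rw [dist_comm q p]
    field_simp
    ring
  have hnonneg : 0 ≤ comparisonCos (dist p q) (dist p w) (dist q w)
      + comparisonCos (dist q p) (dist q w) (dist p w) := by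
    rw [hsum]
    have h₁ : 0 ≤ dist p q + dist p w - dist q w := by
      linarith [dist_triangle q p w, dist_comm q p]
    have h₂ : 0 ≤ dist p q + dist q w - dist p w := by linarith [dist_triangle p q w]
    positivity
  have := arccos_le_arccos (neg_le_iff_add_nonneg.2 hnonneg)
  rw [arccos_neg] at this
  rw [compAngle_eq_arccos_comparisonCos, compAngle_eq_arccos_comparisonCos]
  linarith

theorem IsUnitSpeedGeodesicOn.compAngle_eq_zero {σ : ℝ → X} {L a b : ℝ}
    (hσ : IsUnitSpeedGeodesicOn σ L) (ha : a ∈ Ioc 0 L) (hb : b ∈ Ioc 0 L) :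
    compAngle (σ 0) (σ a) (σ b) = 0 := by
  have h0 : (0 : ℝ) ∈ Icc 0 L := ⟨le_rfl, ha.1.le.trans ha.2⟩
  rw [compAngle, hσ 0 h0 a (Ioc_subset_Icc_self ha), hσ 0 h0 b (Ioc_subset_Icc_self hb),
    hσ a (Ioc_subset_Icc_self ha) b (Ioc_subset_Icc_self hb), zero_sub, zero_sub, abs_neg,
    abs_neg, abs_of_pos ha.1, abs_of_pos hb.1, sq_abs]
  have : (a ^ 2 + b ^ 2 - (a - b) ^ 2) / (2 * a * b) = 1 := by
    rw [div_eq_one_iff_eq (by nlinarith [mul_pos ha.1 hb.1])]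
    ring
  rw [this, arccos_one]

theorem Filter.Tendsto.compAngle {ι : Type*} {l : Filter ι} {p y x₀ : X} {x : ι → X}
    (hx : Tendsto x l (𝓝 x₀)) (hpx : p ≠ x₀) (hpy : p ≠ y) :
    Tendsto (fun i => compAngle p (x i) y) l (𝓝 (compAngle p x₀ y)) := by
  have hpx' : Tendsto (fun i => dist p (x i)) l (𝓝 (dist p x₀)) := tendsto_const_nhds.dist hx
  have hxy : Tendsto (fun i => dist (x i) y) l (𝓝 (dist x₀ y)) := hx.dist tendsto_const_nhds
  refine (continuous_arccos.tendsto _).comp (Tendsto.div ?_ ?_ ?_)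
  · exact ((hpx'.pow 2).add tendsto_const_nhds).sub (hxy.pow 2)
  · exact (tendsto_const_nhds.mul hpx').mul tendsto_const_nhds
  · have := dist_pos.2 hpx
    have := dist_pos.2 hpy
    positivity

theorem exists_euclideanSpace_triangle {a b c : ℝ} (ha : 0 < a) (hb : 0 < b) (hc₁ : |a - b| ≤ c)
    (hc₂ : c ≤ a + b) :
    ∃ A B C : EuclideanSpace ℝ (Fin 2), dist A B = a ∧ dist A C = b ∧ dist B C = c := by
  obtain ⟨hκ₁, hκ₂⟩ := comparisonCos_mem_Icc ha hb hc₁ hc₂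
  set κ := comparisonCos a b c with hκ
  have hs : √(1 - κ ^ 2) ^ 2 = 1 - κ ^ 2 := sq_sqrt (by nlinarith)
  have hab : 2 * a * b * κ = a ^ 2 + b ^ 2 - c ^ 2 := by
    rw [hκ, comparisonCos]
    field_simp
  refine ⟨0, !₂[a, 0], !₂[b * κ, b * √(1 - κ ^ 2)], ?_, ?_, ?_⟩ <;>
    simp only [EuclideanSpace.dist_eq, Fin.sum_univ_two, Real.dist_eq, sq_abs,
      PiLp.zero_apply, Matrix.cons_val_zero, Matrix.cons_val_one]
  · rw [show (0 - a) ^ 2 + (0 - 0) ^ 2 = a ^ 2 by ring, sqrt_sq ha.le]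
  · rw [show (0 - b * κ) ^ 2 + (0 - b * √(1 - κ ^ 2)) ^ 2 = b ^ 2 by
      linear_combination b ^ 2 * hs, sqrt_sq hb.le]
  · rw [show (a - b * κ) ^ 2 + (0 - b * √(1 - κ ^ 2)) ^ 2 = c ^ 2 by
      linear_combination b ^ 2 * hs - hab, sqrt_sq ((abs_nonneg _).trans hc₁)]

theorem dist_lineMap_lineMap_sq {E : Type*} [NormedAddCommGroup E] [InnerProductSpace ℝ E]
    {A B C : E} (hB : A ≠ B) (hC : A ≠ C) (a b : ℝ) :
    dist (AffineMap.lineMap A B (a / dist A B)) (AffineMap.lineMap A C (b / dist A C)) ^ 2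
      = a ^ 2 + b ^ 2 - 2 * a * b * comparisonCos (dist A B) (dist A C) (dist B C) := by
  have hB' : ‖B - A‖ ≠ 0 := by rw [← dist_eq_norm]; exact dist_ne_zero.2 hB.symm
  have hC' : ‖C - A‖ ≠ 0 := by rw [← dist_eq_norm]; exact dist_ne_zero.2 hC.symm
  have hBC : ‖B - C‖ ^ 2 = ‖B - A‖ ^ 2 - 2 * inner ℝ (B - A) (C - A) + ‖C - A‖ ^ 2 := by
    rw [← norm_sub_sq_real, sub_sub_sub_cancel_right]
  rw [dist_comm A B, dist_comm A C, dist_eq_norm, dist_eq_norm, dist_eq_norm, dist_eq_norm,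
    AffineMap.lineMap_apply_module', AffineMap.lineMap_apply_module',
    add_sub_add_right_eq_sub, norm_sub_sq_real, norm_smul, norm_smul, real_inner_smul_left,
    real_inner_smul_right, comparisonCos, hBC, mul_pow, mul_pow, Real.norm_eq_abs,
    Real.norm_eq_abs, sq_abs, sq_abs]
  field_simp
  ring

/-- The first clause of `IsCurvRegion` provides such a path between any two points of `U`. -/
def IsShortestPathIn (U : Set X) (f : ℝ → X) (x y : X) : Prop :=
  IsUnitSpeedGeodesicOn f (dist x y) ∧ f 0 = x ∧ f (dist x y) = y ∧
    ∀ t ∈ Icc (0 : ℝ) (dist x y), f t ∈ U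

namespace IsShortestPathIn

variable {U : Set X} {f : ℝ → X} {x y : X}

theorem left_mem (hf : IsShortestPathIn U f x y) : x ∈ U :=
  hf.2.1 ▸ hf.2.2.2 0 ⟨le_rfl, dist_nonneg⟩

theorem right_mem (hf : IsShortestPathIn U f x y) : y ∈ U :=
  hf.2.2.1 ▸ hf.2.2.2 _ ⟨dist_nonneg, le_rfl⟩

theorem dist_left (hf : IsShortestPathIn U f x y) {a : ℝ} (ha : a ∈ Icc 0 (dist x y)) :
    dist x (f a) = a := by
  rw [← hf.2.1, hf.1 0 ⟨le_rfl, dist_nonneg⟩ a ha, zero_sub, abs_neg, abs_of_nonneg ha.1]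

end IsShortestPathIn

theorem IsUnitSpeedGeodesicOn.dist_zero {γ : ℝ → X} {T t : ℝ} (hγ : IsUnitSpeedGeodesicOn γ T)
    (ht : t ∈ Icc 0 T) : dist (γ 0) (γ t) = t := by
  rw [hγ 0 ⟨le_rfl, ht.1.trans ht.2⟩ t ht, zero_sub, abs_neg, abs_of_nonneg ht.1]

theorem IsUnitSpeedGeodesicOn.isShortestPathIn {U : Set X} {γ : ℝ → X} {T t : ℝ}
    (hγ : IsUnitSpeedGeodesicOn γ T) (ht : t ∈ Icc 0 T) (hU : closedBall (γ 0) t ⊆ U) :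
    IsShortestPathIn U γ (γ 0) (γ t) := by
  have hT : Icc 0 t ⊆ Icc 0 T := Icc_subset_Icc_right ht.2
  rw [IsShortestPathIn, hγ.dist_zero ht]
  refine ⟨fun a ha b hb => hγ a (hT ha) b (hT hb), rfl, rfl, fun a ha => hU ?_⟩
  rw [mem_closedBall, dist_comm, hγ.dist_zero (hT ha)]
  exact ha.2

namespace IsCurvLeRegion

variable {U : Set X}

theorem dist_sq_le (hU : IsCurvLeRegion U) {x y z : X} {f g : ℝ → X}
    (hf : IsShortestPathIn U f x y) (hg : IsShortestPathIn U g x z) (hxy : x ≠ y) (hxz : x ≠ z)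
    {a b : ℝ} (ha : a ∈ Icc 0 (dist x y)) (hb : b ∈ Icc 0 (dist x z)) :
    dist (f a) (g b) ^ 2
      ≤ a ^ 2 + b ^ 2 - 2 * a * b * comparisonCos (dist x y) (dist x z) (dist y z) := by
  obtain ⟨h, hh⟩ := hU.1 y hf.right_mem z hg.right_mem
  obtain ⟨A, B, C, hAB, hAC, hBC⟩ := exists_euclideanSpace_triangle (dist_pos.2 hxy)
    (dist_pos.2 hxz) (by simpa only [dist_comm x] using abs_dist_sub_le y z x)
    (by simpa only [dist_comm x] using dist_triangle y x z)
  have hcomp : dist (f a) (g b) ≤ dist (AffineMap.lineMap A B (a / dist x y))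
      (AffineMap.lineMap A C (b / dist x z)) :=
    hU.2 x hf.left_mem y hf.right_mem z hg.right_mem ![f, g, h]
      (by intro i; fin_cases i; exacts [hf, hg, hh]) A B C hAB hAC hBC 0 1 a b ha hb
  have hA : A ≠ B := dist_pos.1 (hAB ▸ dist_pos.2 hxy)
  have hA' : A ≠ C := dist_pos.1 (hAC ▸ dist_pos.2 hxz)
  calc dist (f a) (g b) ^ 2 ≤ _ := pow_le_pow_left₀ dist_nonneg hcomp 2
    _ = _ := by rw [← hAB, ← hAC, ← hBC]; exact dist_lineMap_lineMap_sq hA hA' a b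

theorem compAngle_le_compAngle (hU : IsCurvLeRegion U) {x y z : X} {f g : ℝ → X}
    (hf : IsShortestPathIn U f x y) (hg : IsShortestPathIn U g x z) {a b : ℝ}
    (ha : a ∈ Ioc 0 (dist x y)) (hb : b ∈ Ioc 0 (dist x z)) :
    compAngle x (f a) (g b) ≤ compAngle x y z := by
  have hthin := hU.dist_sq_le hf hg (dist_pos.1 (ha.1.trans_le ha.2))
    (dist_pos.1 (hb.1.trans_le hb.2)) (Ioc_subset_Icc_self ha) (Ioc_subset_Icc_self hb)
  rw [compAngle_eq_arccos_comparisonCos, compAngle_eq_arccos_comparisonCos,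
    hf.dist_left (Ioc_subset_Icc_self ha), hg.dist_left (Ioc_subset_Icc_self hb)]
  have hab := mul_pos ha.1 hb.1
  refine arccos_le_arccos ((le_div_iff₀ (by linarith)).2 ?_)
  linarith

end IsCurvLeRegion

theorem upperAngle_le_of_forall_compAngle_le {γ η : ℝ → X} {t₀ r₀ B : ℝ} (ht₀ : 0 < t₀)
    (hr₀ : 0 < r₀) (h : ∀ t ∈ Ioc 0 t₀, ∀ r ∈ Ioc 0 r₀, compAngle (γ 0) (γ t) (η r) ≤ B) :
    upperAngle γ η ≤ B := by
  refine limsup_le_of_le (isCoboundedUnder_le_of_le _ fun _ => arccos_nonneg _) ?_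
  filter_upwards [prod_mem_prod (Ioc_mem_nhdsGT ht₀) (Ioc_mem_nhdsGT hr₀)] with tr htr
  exact h _ htr.1 _ htr.2

theorem IsCurvLeRegion.upperAngle_le_compAngle {U : Set X} (hU : IsCurvLeRegion U)
    {γ η : ℝ → X} {T L t r : ℝ} (hγ : IsUnitSpeedGeodesicOn γ T) (hη : IsUnitSpeedGeodesicOn η L)
    (hηγ : η 0 = γ 0) (ht : t ∈ Ioc 0 T) (hr : r ∈ Ioc 0 L)
    (hball : closedBall (γ 0) (max t r) ⊆ U) :
    upperAngle γ η ≤ compAngle (γ 0) (γ t) (η r) := by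
  have hγU := hγ.isShortestPathIn (Ioc_subset_Icc_self ht)
    ((closedBall_subset_closedBall (le_max_left t r)).trans hball)
  have hηU := hη.isShortestPathIn (Ioc_subset_Icc_self hr)
    ((closedBall_subset_closedBall (le_max_right t r)).trans (hηγ ▸ hball))
  rw [hηγ] at hηU
  refine upperAngle_le_of_forall_compAngle_le ht.1 hr.1 fun t' ht' r' hr' => ?_
  refine hU.compAngle_le_compAngle hγU hηU ?_ ?_
  · rwa [hγ.dist_zero (Ioc_subset_Icc_self ht)]
  · rwa [← hηγ, hη.dist_zero (Ioc_subset_Icc_self hr)]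

/-- In the plane, the segment from `t e^{-iφ}` to `r e^{iψ}` crosses the positive real axis at a
point `m ≤ max t r`; the three square roots are the lengths of the segment and of its two
pieces, by the law of cosines. -/
theorem exists_sqrt_add_sqrt_eq_sqrt {t r φ ψ : ℝ} (ht : 0 < t) (hr : 0 < r) (hφ : 0 ≤ φ)
    (hψ : 0 ≤ ψ) (hφψ : φ + ψ < π) :
    ∃ m ∈ Icc 0 (max t r), √(t ^ 2 + m ^ 2 - 2 * t * m * cos φ)
      + √(m ^ 2 + r ^ 2 - 2 * m * r * cos ψ) = √(t ^ 2 + r ^ 2 - 2 * t * r * cos (φ + ψ)) := by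
  have hsφ : 0 ≤ sin φ := sin_nonneg_of_nonneg_of_le_pi hφ (by linarith)
  have hsψ : 0 ≤ sin ψ := sin_nonneg_of_nonneg_of_le_pi hψ (by linarith)
  have hcφ := cos_le_one φ
  have hcψ := cos_le_one ψ
  rcases (show 0 ≤ t * sin φ + r * sin ψ by positivity).eq_or_lt with hD | hD
  · obtain ⟨hφ0, hψ0⟩ := (add_eq_zero_iff_of_nonneg (by positivity) (by positivity)).1 hD.symm
    have hφ0 : φ = 0 := (sin_eq_zero_iff_of_lt_of_lt (by linarith) (by linarith)).1
      ((mul_eq_zero.1 hφ0).resolve_left ht.ne')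
    have hψ0 : ψ = 0 := (sin_eq_zero_iff_of_lt_of_lt (by linarith) (by linarith)).1
      ((mul_eq_zero.1 hψ0).resolve_left hr.ne')
    refine ⟨t, ⟨ht.le, le_max_left t r⟩, ?_⟩
    rw [hφ0, hψ0, add_zero, cos_zero, show t ^ 2 + t ^ 2 - 2 * t * t * 1 = 0 by ring, sqrt_zero,
      zero_add]
  obtain ⟨m, hm⟩ : ∃ m, m * (t * sin φ + r * sin ψ) = t * r * sin (φ + ψ) :=
    ⟨_, div_mul_cancel₀ _ hD.ne'⟩
  have hE : 0 ≤ t ^ 2 + r ^ 2 - 2 * t * r * cos (φ + ψ) := by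
    nlinarith [cos_le_one (φ + ψ), mul_pos ht hr, sq_nonneg (t - r)]
  have hsqrt : ∀ {x a : ℝ}, 0 ≤ a → x * (t * sin φ + r * sin ψ) ^ 2
      = a ^ 2 * (t ^ 2 + r ^ 2 - 2 * t * r * cos (φ + ψ)) →
      √x = a / (t * sin φ + r * sin ψ) * √(t ^ 2 + r ^ 2 - 2 * t * r * cos (φ + ψ)) := by
    intro x a ha hx
    rw [← eq_div_iff (by positivity), mul_div_right_comm, ← div_pow] at hx
    rw [hx, sqrt_mul' _ hE, sqrt_sq (by positivity)]
  have hmS : 0 ≤ m * (t * sin φ + r * sin ψ) := by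
    rw [hm]
    have := sin_nonneg_of_nonneg_of_le_pi (add_nonneg hφ hψ) hφψ.le
    positivity
  refine ⟨m, ⟨nonneg_of_mul_nonneg_left hmS hD, ?_⟩, ?_⟩
  · refine le_of_mul_le_mul_right ?_ hD
    rw [hm, sin_add]
    have h₁ : t * r * (sin φ * cos ψ) ≤ max t r * (t * sin φ) :=
      calc t * r * (sin φ * cos ψ) ≤ r * (t * sin φ) := by
            nlinarith [mul_le_of_le_one_right hsφ hcψ, mul_pos ht hr]
        _ ≤ max t r * (t * sin φ) := by gcongr; exact le_max_right t r
    have h₂ : t * r * (cos φ * sin ψ) ≤ max t r * (r * sin ψ) :=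
      calc t * r * (cos φ * sin ψ) ≤ t * (r * sin ψ) := by
            nlinarith [mul_le_of_le_one_left hsψ hcφ, mul_pos ht hr]
        _ ≤ max t r * (r * sin ψ) := by gcongr; exact le_max_left t r
    linarith
  rw [sin_add] at hm
  have hleft := hsqrt (x := t ^ 2 + m ^ 2 - 2 * t * m * cos φ) (mul_nonneg ht.le hsφ) (by
    rw [cos_add]
    linear_combination (m * (t * sin φ + r * sin ψ) + t * r * (sin φ * cos ψ + cos φ * sin ψ)
        - 2 * t * cos φ * (t * sin φ + r * sin ψ)) * hm
      + (t ^ 2 * (-2 * t * r * sin φ * sin ψ - r ^ 2 * sin ψ ^ 2)) * sin_sq_add_cos_sq φ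
      + (t ^ 2 * r ^ 2 * sin φ ^ 2) * sin_sq_add_cos_sq ψ)
  have hright := hsqrt (x := m ^ 2 + r ^ 2 - 2 * m * r * cos ψ) (mul_nonneg hr.le hsψ) (by
    rw [cos_add]
    linear_combination (m * (t * sin φ + r * sin ψ) + t * r * (sin φ * cos ψ + cos φ * sin ψ)
        - 2 * r * cos ψ * (t * sin φ + r * sin ψ)) * hm
      + (r ^ 2 * t ^ 2 * sin ψ ^ 2) * sin_sq_add_cos_sq φ
      + (r ^ 2 * (-2 * t * r * sin φ * sin ψ - t ^ 2 * sin φ ^ 2)) * sin_sq_add_cos_sq ψ)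
  rw [hleft, hright, ← add_mul, ← add_div, div_self hD.ne', one_mul]

theorem dist_sq_le_of_forall_dist_sq_le {x z : X} {χ : ℝ → X} {t r c φ ψ : ℝ} (ht : 0 < t)
    (hr : 0 < r) (htc : t ≤ c) (hrc : r ≤ c) (hφ : 0 ≤ φ) (hψ : 0 ≤ ψ) (hφψ : φ + ψ < π)
    (hx : ∀ m ∈ Icc 0 c, dist x (χ m) ^ 2 ≤ t ^ 2 + m ^ 2 - 2 * t * m * cos φ)
    (hz : ∀ m ∈ Icc 0 c, dist (χ m) z ^ 2 ≤ m ^ 2 + r ^ 2 - 2 * m * r * cos ψ) :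
    dist x z ^ 2 ≤ t ^ 2 + r ^ 2 - 2 * t * r * cos (φ + ψ) := by
  obtain ⟨m, hm, hsum⟩ := exists_sqrt_add_sqrt_eq_sqrt ht hr hφ hψ hφψ
  have hmc : m ∈ Icc 0 c := ⟨hm.1, hm.2.trans (max_le htc hrc)⟩
  have hE : 0 ≤ t ^ 2 + r ^ 2 - 2 * t * r * cos (φ + ψ) := by
    nlinarith [cos_le_one (φ + ψ), mul_pos ht hr, sq_nonneg (t - r)]
  refine (le_sqrt dist_nonneg hE).1 ?_
  calc dist x z ≤ dist x (χ m) + dist (χ m) z := dist_triangle _ _ _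
    _ ≤ _ := add_le_add (le_sqrt_of_sq_le (hx m hmc)) (le_sqrt_of_sq_le (hz m hmc))
    _ = _ := hsum

/-- Glue the comparison triangles of `q p w` and `q w z` along a shortest path from `q` to `w`;
as `w` is the farthest of the three points from `q`, the crossing point stays on that path. -/
theorem IsCurvLeRegion.compAngle_le_compAngle_add_compAngle {U : Set X} (hU : IsCurvLeRegion U)
    {q p w z : X} (hq : q ∈ U) (hp : p ∈ U) (hw : w ∈ U) (hz : z ∈ U) (hqp : q ≠ p) (hqz : q ≠ z)
    (hpw : dist q p ≤ dist q w) (hzw : dist q z ≤ dist q w) :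
    compAngle q p z ≤ compAngle q p w + compAngle q w z := by
  have ht := dist_pos.2 hqp
  have hr := dist_pos.2 hqz
  have hqw : q ≠ w := dist_pos.1 (ht.trans_le hpw)
  by_cases hπ : π ≤ compAngle q p w + compAngle q w z
  · exact (arccos_le_pi _).trans hπ
  obtain ⟨f, hf⟩ := hU.1 q hq p hp
  obtain ⟨χ, hχ⟩ := hU.1 q hq w hw
  obtain ⟨g, hg⟩ := hU.1 q hq z hz
  have hdist := dist_sq_le_of_forall_dist_sq_le (x := p) (z := z) (χ := χ)
    (φ := compAngle q p w) (ψ := compAngle q w z) ht hr hpw hzw (arccos_nonneg _)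
    (arccos_nonneg _) (not_le.1 hπ)
    (fun m hm => by
      have := hU.dist_sq_le hf hχ hqp hqw ⟨dist_nonneg, le_rfl⟩ hm
      rwa [hf.2.2.1, ← cos_compAngle hqp hqw] at this)
    (fun m hm => by
      have := hU.dist_sq_le hχ hg hqw hqz hm ⟨dist_nonneg, le_rfl⟩
      rwa [hg.2.2.1, ← cos_compAngle hqw hqz] at this)
  calc compAngle q p z ≤ arccos (cos (compAngle q p w + compAngle q w z)) := by
        refine arccos_le_arccos ((le_div_iff₀ (by positivity)).2 ?_)
        linarith
    _ = compAngle q p w + compAngle q w z :=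
        arccos_cos (add_nonneg (arccos_nonneg _) (arccos_nonneg _)) (not_le.1 hπ).le

theorem IsCurvLeRegion.compAngle_le_pi_sub_upperAngle_add {U : Set X} (hU : IsCurvLeRegion U)
    {γ σ : ℝ → X} {T L ρ t s : ℝ} {w : X} (hball : closedBall (γ 0) ρ ⊆ U)
    (hγ : IsUnitSpeedGeodesicOn γ T) (hσ : IsUnitSpeedGeodesicOn σ L) (hσγ : σ 0 = γ 0)
    (ht : 0 < t) (hts : 2 * t ≤ s) (hsρ : 2 * s ≤ ρ) (hsT : s ≤ T) (hsL : s ≤ L)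
    (hw : dist (γ t) w = s) :
    compAngle (γ t) (γ 0) w ≤ π - upperAngle γ σ + compAngle (γ 0) w (σ (s / 2)) := by
  have htT : t ∈ Ioc 0 T := ⟨ht, by linarith⟩
  have hsL' : s / 2 ∈ Ioc 0 L := ⟨by linarith, by linarith⟩
  have hqp : dist (γ 0) (γ t) = t := hγ.dist_zero (Ioc_subset_Icc_self htT)
  have hqz : dist (γ 0) (σ (s / 2)) = s / 2 := hσγ ▸ hσ.dist_zero (Ioc_subset_Icc_self hsL')
  have hqw₁ : s - t ≤ dist (γ 0) w := by
    linarith [dist_triangle (γ t) (γ 0) w, dist_comm (γ t) (γ 0)]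
  have hqw₂ : dist (γ 0) w ≤ t + s := by linarith [dist_triangle (γ 0) (γ t) w]
  have hmem : ∀ {x}, dist (γ 0) x ≤ ρ → x ∈ U := fun h => hball (by rwa [mem_closedBall, dist_comm])
  have hangle := hU.upperAngle_le_compAngle hγ hσ hσγ htT hsL'
    ((closedBall_subset_closedBall (max_le (by linarith) (by linarith))).trans hball)
  have hglue := hU.compAngle_le_compAngle_add_compAngle (p := γ t) (w := w) (z := σ (s / 2))
    (hmem (by rw [dist_self]; linarith))
    (hmem (by linarith)) (hmem (by linarith)) (hmem (by linarith))
    (dist_pos.1 (by linarith)) (dist_pos.1 (by linarith)) (by linarith) (by linarith)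
  have hsum := compAngle_add_compAngle_le_pi (p := γ t) (q := γ 0) (w := w)
    (dist_pos.1 (by rw [dist_comm]; linarith)) (dist_pos.1 (by linarith))
    (dist_pos.1 (by linarith))
  linarith

def IsConstSpeedPath (f : ℝ → X) (L : ℝ) : Prop :=
  ∀ u ∈ Icc (0 : ℝ) 1, ∀ v ∈ Icc (0 : ℝ) 1, dist (f u) (f v) = L * |u - v|

namespace IsConstSpeedPath

variable {f : ℝ → X} {L : ℝ}

theorem div_mem_Icc {s : ℝ} (hL : 0 < L) (hs : s ∈ Icc 0 L) : s / L ∈ Icc (0 : ℝ) 1 :=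
  ⟨div_nonneg hs.1 hL.le, (div_le_one hL).2 hs.2⟩

theorem isUnitSpeedGeodesicOn_comp_div (hf : IsConstSpeedPath f L) (hL : 0 < L) :
    IsUnitSpeedGeodesicOn (fun r => f (r / L)) L := by
  intro a ha b hb
  rw [hf _ (div_mem_Icc hL ha) _ (div_mem_Icc hL hb), ← sub_div, abs_div, abs_of_pos hL,
    mul_div_cancel₀ _ hL.ne']

theorem dist_zero_div (hf : IsConstSpeedPath f L) (hL : 0 < L) {s : ℝ} (hs : s ∈ Icc 0 L) :
    dist (f 0) (f (s / L)) = s := by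
  simpa [div_zero] using (hf.isUnitSpeedGeodesicOn_comp_div hL).dist_zero hs

theorem continuousOn (hf : IsConstSpeedPath f L) : ContinuousOn f (Icc 0 1) :=
  (LipschitzOnWith.of_dist_le' fun u hu v hv => (hf u hu v hv).trans_le
    (by rw [Real.dist_eq])).continuousOn

end IsConstSpeedPath

theorem TendstoUniformlyOn.tendsto_apply_div {ι : Type*} {l : Filter ι} {F : ι → ℝ → X}
    {f : ℝ → X} {L : ℝ} {ℓ : ι → ℝ} {ℓ₀ s : ℝ} (hF : TendstoUniformlyOn F f l (Icc 0 1))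
    (hf : IsConstSpeedPath f L) (hℓ : Tendsto ℓ l (𝓝 ℓ₀)) (hs : 0 ≤ s) (hsℓ : s < ℓ₀) :
    Tendsto (fun i => F i (s / ℓ i)) l (𝓝 (f (s / ℓ₀))) := by
  have hℓ₀ : 0 < ℓ₀ := hs.trans_lt hsℓ
  refine hF.tendsto_comp (hf.continuousOn _ (IsConstSpeedPath.div_mem_Icc hℓ₀ ⟨hs, hsℓ.le⟩))
    (tendsto_nhdsWithin_iff.2 ⟨tendsto_const_nhds.div hℓ hℓ₀.ne', ?_⟩)
  filter_upwards [hℓ.eventually (eventually_gt_nhds hsℓ)] with i hi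
  exact IsConstSpeedPath.div_mem_Icc (hs.trans_lt hi) ⟨hs, hi.le⟩

theorem TendstoUniformlyOn.tendsto_compAngle_apply_div {ι : Type*} {l : Filter ι}
    {F : ι → ℝ → X} {f : ℝ → X} {ℓ : ι → ℝ} {ℓ₀ s : ℝ} (hF : TendstoUniformlyOn F f l (Icc 0 1))
    (hf : IsConstSpeedPath f ℓ₀) (hℓ : Tendsto ℓ l (𝓝 ℓ₀)) (hs : 0 < s) (hsℓ : s < ℓ₀) :
    Tendsto (fun i => compAngle (f 0) (F i (s / ℓ i)) (f (s / 2 / ℓ₀))) l (𝓝 0) := by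
  have hσ := hf.isUnitSpeedGeodesicOn_comp_div (hs.trans hsℓ)
  have hs₁ : s ∈ Ioc 0 ℓ₀ := ⟨hs, hsℓ.le⟩
  have hs₂ : s / 2 ∈ Ioc 0 ℓ₀ := ⟨half_pos hs, by linarith⟩
  have hdist : ∀ r ∈ Ioc 0 ℓ₀, dist (f 0) (f (r / ℓ₀)) = r := fun r hr =>
    hf.dist_zero_div (hs.trans hsℓ) (Ioc_subset_Icc_self hr)
  have hw := (hF.tendsto_apply_div hf hℓ hs.le hsℓ).compAngle (y := f (s / 2 / ℓ₀))
    (dist_pos.1 ((hdist s hs₁).symm ▸ hs₁.1)) (dist_pos.1 ((hdist _ hs₂).symm ▸ hs₂.1))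
  convert hw using 2
  simpa only [zero_div] using (hσ.compAngle_eq_zero hs₁ hs₂).symm

theorem limsup_le_of_eventually_le_add_of_tendsto_zero {ι : Type*} {l : Filter ι} [l.NeBot]
    {u v : ι → ℝ} {c : ℝ} (hu : IsCoboundedUnder (· ≤ ·) l u) (huv : ∀ᶠ i in l, u i ≤ c + v i)
    (hv : Tendsto v l (𝓝 0)) : limsup u l ≤ c := by
  have hlim : Tendsto (fun i => c + v i) l (𝓝 c) := by simpa using tendsto_const_nhds.add hv
  exact (limsup_le_limsup huv hu hlim.isBoundedUnder_le).trans_eq hlim.limsup_eq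

end

theorem asymptotic_angle_bound_of_curvLe_general {X : Type*} [MetricSpace X]
    (hcurv : ∀ p : X, ∃ U ∈ 𝓝 p, IsCurvLeRegion U)
    {K : Set X} (hK : IsCompact K) (hKne : K.Nonempty)
    {T : ℝ} (hT : 0 < T)
    (γ : ℝ → X) (hγ : IsUnitSpeedGeodesicOn γ T) (hγ0 : γ 0 ∉ K)
    (tn : ℕ → ℝ) (htn : ∀ n, tn n ∈ Set.Ioc (0:ℝ) T)
    (htn0 : Filter.Tendsto tn atTop (𝓝 0))
    (σn : ℕ → ℝ → X)
    (hσn : ∀ n, (∀ u ∈ Set.Icc (0:ℝ) 1, ∀ v ∈ Set.Icc (0:ℝ) 1,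
        dist (σn n u) (σn n v) = Metric.infDist (γ (tn n)) K * |u - v|) ∧
      σn n 0 = γ (tn n) ∧ σn n 1 ∈ K)
    (σ0 : ℝ → X)
    (hσ0 : (∀ u ∈ Set.Icc (0:ℝ) 1, ∀ v ∈ Set.Icc (0:ℝ) 1,
        dist (σ0 u) (σ0 v) = Metric.infDist (γ 0) K * |u - v|) ∧
      σ0 0 = γ 0 ∧ σ0 1 ∈ K)
    (hconv : TendstoUniformlyOn (fun n u => σn n u) σ0 atTop (Set.Icc 0 1)) :
    ∃ s' > (0:ℝ), ∀ s ∈ Set.Ioc (0:ℝ) s',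
      Filter.limsup (fun n => compAngle (γ (tn n)) (γ 0)
          (σn n (s / Metric.infDist (γ (tn n)) K))) atTop
        ≤ Real.pi - upperAngle γ (fun r => σ0 (r / Metric.infDist (γ 0) K)) := by
  obtain ⟨U, hUγ, hU⟩ := hcurv (γ 0)
  obtain ⟨ρ, hρ, hball⟩ := nhds_basis_closedBall.mem_iff.1 hUγ
  set ℓ₀ := infDist (γ 0) K
  have hℓ₀ : 0 < ℓ₀ := (hK.isClosed.notMem_iff_infDist_pos hKne).1 hγ0
  have hσ := IsConstSpeedPath.isUnitSpeedGeodesicOn_comp_div hσ0.1 hℓ₀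
  have hσγ : σ0 (0 / ℓ₀) = γ 0 := by rw [zero_div, hσ0.2.1]
  have hγtn : Tendsto (fun n => γ (tn n)) atTop (𝓝 (γ 0)) :=
    tendsto_iff_dist_tendsto_zero.2 <| htn0.congr fun n => by
      rw [dist_comm, hγ.dist_zero (Ioc_subset_Icc_self (htn n))]
  have hℓ : Tendsto (fun n => infDist (γ (tn n)) K) atTop (𝓝 ℓ₀) :=
    ((continuous_infDist_pt K).tendsto _).comp hγtn
  refine ⟨min (ρ / 2) (min T (ℓ₀ / 2)), by positivity, fun s hs => ?_⟩
  have hsρ : 2 * s ≤ ρ := by linarith [hs.2.trans (min_le_left _ _)]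
  have hsT : s ≤ T := hs.2.trans ((min_le_right _ _).trans (min_le_left _ _))
  have hsℓ : s < ℓ₀ := by linarith [hs.2.trans ((min_le_right _ _).trans (min_le_right _ _))]
  have hψ := hconv.tendsto_compAngle_apply_div hσ0.1 hℓ hs.1 hsℓ
  rw [hσ0.2.1] at hψ
  refine limsup_le_of_eventually_le_add_of_tendsto_zero
    (isCoboundedUnder_le_of_le _ fun _ => arccos_nonneg _) ?_ hψ
  filter_upwards [htn0.eventually (eventually_le_nhds (half_pos hs.1)),
    hℓ.eventually (eventually_gt_nhds hsℓ)] with n htn' hℓn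
  refine hU.compAngle_le_pi_sub_upperAngle_add hball hγ hσ hσγ (htn n).1 (by linarith) hsρ hsT
    hsℓ.le ?_
  have hdist := IsConstSpeedPath.dist_zero_div (hσn n).1 (hs.1.trans hℓn) ⟨hs.1.le, hℓn.le⟩
  rwa [(hσn n).2.1] at hdist

/-- Lemma 4.3, curvature `≤ 0` case: asymptotic angle bound for shortest
paths to a compact set. -/
theorem asymptotic_angle_bound_of_curvLe {X : Type*} [MetricSpace X]
    [ProperSpace X]
    (hgeo : ∀ x y : X, ∃ γ : ℝ → X, IsUnitSpeedGeodesicOn γ (dist x y) ∧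
      γ 0 = x ∧ γ (dist x y) = y)
    (hcurv : ∀ p : X, ∃ U ∈ 𝓝 p, IsCurvLeRegion U)
    {K : Set X} (hK : IsCompact K) (hKne : K.Nonempty)
    {T : ℝ} (hT : 0 < T)
    (γ : ℝ → X) (hγ : IsUnitSpeedGeodesicOn γ T) (hγ0 : γ 0 ∉ K)
    (tn : ℕ → ℝ) (htn : ∀ n, tn n ∈ Set.Ioc (0:ℝ) T)
    (htn0 : Filter.Tendsto tn atTop (𝓝 0))
    (σn : ℕ → ℝ → X)
    (hσn : ∀ n, (∀ u ∈ Set.Icc (0:ℝ) 1, ∀ v ∈ Set.Icc (0:ℝ) 1,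
        dist (σn n u) (σn n v) = Metric.infDist (γ (tn n)) K * |u - v|) ∧
      σn n 0 = γ (tn n) ∧ σn n 1 ∈ K)
    (σ0 : ℝ → X)
    (hσ0 : (∀ u ∈ Set.Icc (0:ℝ) 1, ∀ v ∈ Set.Icc (0:ℝ) 1,
        dist (σ0 u) (σ0 v) = Metric.infDist (γ 0) K * |u - v|) ∧
      σ0 0 = γ 0 ∧ σ0 1 ∈ K)
    (hconv : TendstoUniformlyOn (fun n u => σn n u) σ0 atTop (Set.Icc 0 1)) :
    ∃ s' > (0:ℝ), ∀ s ∈ Set.Ioc (0:ℝ) s',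
      Filter.limsup (fun n => compAngle (γ (tn n)) (γ 0)
          (σn n (s / Metric.infDist (γ (tn n)) K))) atTop
        ≤ Real.pi - upperAngle γ (fun r => σ0 (r / Metric.infDist (γ 0) K)) :=
  asymptotic_angle_bound_of_curvLe_general hcurv hK hKne hT γ hγ hγ0 tn htn htn0 σn hσn σ0 hσ0 hconv
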